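/- Let M, c, K, τ_u > 0 be real constants, X(τ, p) = M·τ/(c·p²·K²), and R(τ, p) = p·K·(τ_u − τ)·log₂(1 + X(τ, p)). Let s₀ be the unique positive solution of ln(1+x) = 2x/(1+x). Set τ^h = τ_u/3 and p^h = (1/K)·√(τ_u·M/(3·s₀·c)). Then X(τ^h, p^h) = s₀ and both partial derivatives of R vanish at (τ^h, p^h), i.e., (τ^h, p^h) is a stationary point of R. -/

import Mathlib

/-!
With `X = M τ / (c p² K²)`, the rate is `R = p K (τ_u − τ) log₂(1 + X)`. Since `X` scales like
`p⁻²`, `∂R/∂p` is proportional to `ln(1 + X) − 2X/(1 + X)`, which vanishes exactly when `X = s₀`.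
Since `X` is linear in `τ`, `∂R/∂τ` is proportional to `−ln(1 + X) + (τ_u − τ) X / (τ (1 + X))`;
at `τ = τ_u/3` we have `τ_u − τ = 2τ`, so this is again `−ln(1 + X) + 2X/(1 + X)`.
The choice of `p^h` is exactly the one making `X(τ^h, p^h) = s₀`.
-/

open Real

theorem hasDerivAt_sub_mul_log_one_add_mul {a T : ℝ} (t : ℝ) (h : 1 + a * t ≠ 0) :
    HasDerivAt (fun t => (T - t) * log (1 + a * t))
      (-log (1 + a * t) + (T - t) * a / (1 + a * t)) t := by
  have hlin : HasDerivAt (fun t => 1 + a * t) a t := by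
    simpa using ((hasDerivAt_id t).const_mul a).const_add 1
  have hsub : HasDerivAt (fun t => T - t) (-1) t := by
    simpa using (hasDerivAt_id t).const_sub T
  exact (hsub.fun_mul (hlin.log h)).congr_deriv (by ring)

theorem hasDerivAt_mul_log_one_add_div_sq {b : ℝ} (q : ℝ) (hq : q ≠ 0) (h : 1 + b / q ^ 2 ≠ 0) :
    HasDerivAt (fun q => q * log (1 + b / q ^ 2))
      (log (1 + b / q ^ 2) - 2 * (b / q ^ 2) / (1 + b / q ^ 2)) q := by
  have hinv : HasDerivAt (fun q => 1 + b / q ^ 2) (-(2 * b) / q ^ 3) q := by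
    refine (((hasDerivAt_const q b).fun_div (hasDerivAt_pow 2 q) (pow_ne_zero 2 hq)).const_add 1
      ).congr_deriv ?_
    field_simp
    ring
  refine ((hasDerivAt_id' q).fun_mul (hinv.log h)).congr_deriv ?_
  field_simp
  ring

/-- The heuristic point `τ^h = τ_u/3`, `p^h = (1/K) √(τ_u M/(3 s₀ c))` satisfies
`X(τ^h, p^h) = s₀` and is a stationary point of
`R(τ, p) = p K (τ_u − τ) log₂(1 + X(τ, p))`, where `X(τ, p) = M τ / (c p² K²)`
and `s₀` is the unique positive solution of `ln(1+x) = 2x/(1+x)`. -/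
theorem stmt6 (M c K τu : ℝ) (hM : 0 < M) (hc : 0 < c) (hK : 0 < K) (hτu : 0 < τu)
    (s₀ : ℝ) (hs₀pos : 0 < s₀) (hs₀eq : Real.log (1 + s₀) = 2 * s₀ / (1 + s₀))
    (X R : ℝ → ℝ → ℝ)
    (hX : ∀ τ p : ℝ, X τ p = M * τ / (c * p ^ 2 * K ^ 2))
    (hR : ∀ τ p : ℝ, R τ p = p * K * (τu - τ) * Real.logb 2 (1 + X τ p))
    (τh ph : ℝ) (hτh : τh = τu / 3)
    (hph : ph = (1 / K) * Real.sqrt (τu * M / (3 * s₀ * c))) :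
    X τh ph = s₀ ∧
    deriv (fun t => R t ph) τh = 0 ∧
    deriv (fun q => R τh q) ph = 0 := by
  have hph_sq : c * ph ^ 2 * K ^ 2 = τu * M / (3 * s₀) := by
    rw [hph, mul_pow, sq_sqrt (by positivity)]
    field_simp
  have hph_ne : ph ≠ 0 := by
    rintro rfl
    have : 0 < τu * M / (3 * s₀) := by positivity
    simp [← hph_sq] at this
  have hXh : X τh ph = s₀ := by
    rw [hX, hτh, hph_sq]
    field_simp
  have hs₀_ne : 1 + s₀ ≠ 0 := by positivity
  refine ⟨hXh, ?_, ?_⟩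
  · have haτ : M / (c * ph ^ 2 * K ^ 2) * τh = s₀ := by rw [← hXh, hX]; ring
    have hfun : (fun t => R t ph) =
        fun t => ph * K / log 2 * ((τu - t) * log (1 + M / (c * ph ^ 2 * K ^ 2) * t)) := by
      ext t; rw [hR, hX, logb]; ring_nf
    rw [hfun, ((hasDerivAt_sub_mul_log_one_add_mul τh (by rwa [haτ])).const_mul _).deriv, haτ,
      hs₀eq, show (τu - τh) * (M / (c * ph ^ 2 * K ^ 2)) = 2 * s₀ by rw [← haτ, hτh]; ring]
    ring
  · have hbq : M * τh / (c * K ^ 2) / ph ^ 2 = s₀ := by rw [← hXh, hX]; ring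
    have hfun : (fun q => R τh q) =
        fun q => K * (τu - τh) / log 2 * (q * log (1 + M * τh / (c * K ^ 2) / q ^ 2)) := by
      ext q; rw [hR, hX, logb]; ring_nf
    rw [hfun, ((hasDerivAt_mul_log_one_add_div_sq ph hph_ne (by rwa [hbq])).const_mul _).deriv,
      hbq, hs₀eq, sub_self, mul_zero]
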